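/- Let H be a complex Hilbert space, D a dictionary (a set of unit vectors whose closed linear span equals H), M > 0, and f ∈ H(D,M) with representation f = ∑_{j=1}^∞ c_j ψ̃_j, ψ̃_j ∈ D, ∑_{j=1}^∞ |c_j| ≤ M. Suppose the Weak Pre-Orthogonal Greedy Algorithm with weakness parameters t_k ∈ (0,1] produces selections ψ_1, ψ_2, … ∈ D as follows: H_0 = {0}; at step k, H_k is the span of {ψ_1,…,ψ_k}, f_k = f − P_{H_{k-1}}(f), ψ_k satisfies d_k := ‖ψ_k − P_{H_{k-1}}(ψ_k)‖ > 0, B_k := (ψ_k − P_{H_{k-1}}(ψ_k))/d_k, and |⟨f_k, B_k⟩| ≥ t_k·sup{ |⟨f_k, ψ⟩|/‖ψ − P_{H_{k-1}}(ψ)‖ : ψ ∈ D, ‖ψ − P_{H_{k-1}}(ψ)‖ > 0 }. Set r_k = sup_{j≥1} ‖ψ̃_j − P_{H_{k-1}}(ψ̃_j)‖ and assume r_k > 0. Then for every n ≥ 1, ‖f_n‖ ≤ M·(1 + ∑_{k=1}^{n-1} (t_k/r_k)²)^{-1/2}. -/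

import Mathlib

/-! Since `fₖ ⊥ H_{k-1}`, `‖fₖ‖² = ⟨fₖ, f⟩ = ∑ cⱼ ⟨fₖ, ψ̃ⱼ - P ψ̃ⱼ⟩`, and the weak selection rule
bounds every term by `rₖ |⟨fₖ, Bₖ⟩| / tₖ`, so `tₖ ‖fₖ‖² ≤ M rₖ |⟨fₖ, Bₖ⟩|`. As `Bₖ` is a unit
vector of `H_k`, removing its component from `fₖ` gives `‖f_{k+1}‖² ≤ ‖fₖ‖² - |⟨fₖ, Bₖ⟩|²`.
Hence `aₖ = ‖fₖ‖²` obeys `M² a_{k+1} ≤ M² aₖ - (tₖ / rₖ)² aₖ²` with `a₁ ≤ M²`, and this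
recursion integrates to `aₙ (1 + ∑_{k < n} (tₖ / rₖ)²) ≤ M²`. -/

noncomputable def proj {H : Type*} [NormedAddCommGroup H] [InnerProductSpace ℂ H]
    [CompleteSpace H] (K : Submodule ℂ H) (f : H) : H :=
  haveI : CompleteSpace K.topologicalClosure := K.isClosed_topologicalClosure.completeSpace_coe
  (K.topologicalClosure.orthogonalProjectionOnto f : H)

open Finset
open scoped InnerProductSpace

theorem mul_one_add_sum_le_of_sq_le_mul_sub {a w : ℕ → ℝ} {A : ℝ} (hA : 0 < A)
    (ha : ∀ k, 0 ≤ a k) (hw : ∀ k, 0 ≤ w k) (h1 : a 1 ≤ A)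
    (hstep : ∀ k, 1 ≤ k → w k * a k ^ 2 ≤ A * (a k - a (k + 1))) :
    ∀ n, 1 ≤ n → a n * (1 + ∑ k ∈ Icc 1 (n - 1), w k) ≤ A := by
  intro n hn
  induction n, hn using Nat.le_induction with
  | base => simpa using h1
  | succ n hn IH =>
    set S := 1 + ∑ k ∈ Icc 1 (n - 1), w k
    have hS : 1 + ∑ k ∈ Icc 1 (n + 1 - 1), w k = S + w n := by
      obtain ⟨m, rfl⟩ := Nat.exists_eq_add_of_le' hn
      simp only [Nat.add_sub_cancel, S]
      rw [sum_Icc_succ_top (by omega), add_assoc]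
    have hS1 : 1 ≤ S := le_add_of_nonneg_right (sum_nonneg fun k _ => hw k)
    -- with `p = a S ≤ A` and `q = a w`, the bound reads `(p + q) (A - q) ≤ A ^ 2`
    have key : A * (a (n + 1) * (S + w n)) ≤ A * A := by
      calc A * (a (n + 1) * (S + w n))
          ≤ (A * a n - w n * a n ^ 2) * (S + w n) := by
            rw [← mul_assoc]
            exact mul_le_mul_of_nonneg_right (by linarith [hstep n hn]) (by linarith [hw n])
        _ = (a n * S + a n * w n) * (A - a n * w n) := by ring
        _ ≤ A * A := by
            have hp : 0 ≤ a n * S := mul_nonneg (ha n) (by linarith)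
            have hq : 0 ≤ a n * w n := mul_nonneg (ha n) (hw n)
            rcases le_total (a n * w n) A with hqA | hAq
            · nlinarith [mul_nonneg (sub_nonneg.2 IH) (sub_nonneg.2 hqA)]
            · nlinarith [mul_nonpos_of_nonneg_of_nonpos (add_nonneg hp hq) (sub_nonpos.2 hAq)]
    rw [hS]
    exact le_of_mul_le_mul_left key hA

theorem div_sq_mul_sq_le_of_le_mul {t r M C a a' : ℝ} (hr : 0 < r) (hta : 0 ≤ t * a)
    (hcap : t * a ≤ M * (r * C)) (hdec : a' ≤ a - C ^ 2) :
    (t / r) ^ 2 * a ^ 2 ≤ M ^ 2 * (a - a') := by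
  have hsq := pow_le_pow_left₀ hta hcap 2
  calc (t / r) ^ 2 * a ^ 2 = (t * a) ^ 2 / r ^ 2 := by ring
    _ ≤ M ^ 2 * C ^ 2 := by
      rw [div_le_iff₀ (pow_pos hr 2)]; linarith
    _ ≤ M ^ 2 * (a - a') := by
      gcongr; linarith

theorem le_div_sqrt_of_sq_mul_le {x M S : ℝ} (hx : 0 ≤ x) (hM : 0 ≤ M) (hS : 0 < S)
    (h : x ^ 2 * S ≤ M ^ 2) : x ≤ M / √S := by
  rw [← Real.sqrt_sq hM, ← Real.sqrt_div' _ hS.le]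
  exact (Real.le_sqrt hx (by positivity)).2 ((le_div_iff₀ hS).2 h)

theorem norm_sub_inner_smul_sq {𝕜 E : Type*} [RCLike 𝕜] [NormedAddCommGroup E]
    [InnerProductSpace 𝕜 E] {B : E} (hB : ‖B‖ = 1) (x : E) :
    ‖x - ⟪B, x⟫_𝕜 • B‖ ^ 2 = ‖x‖ ^ 2 - ‖⟪x, B⟫_𝕜‖ ^ 2 := by
  have horth : ⟪x - ⟪B, x⟫_𝕜 • B, ⟪B, x⟫_𝕜 • B⟫_𝕜 = 0 := by
    simp [inner_sub_left, inner_smul_left, inner_smul_right, inner_self_eq_norm_sq_to_K, hB]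
  have := norm_add_sq_eq_norm_sq_add_norm_sq_of_inner_eq_zero _ _ horth
  rw [sub_add_cancel, norm_smul, hB, mul_one, ← norm_inner_symm] at this
  linarith

theorem norm_le_tsum_norm_of_hasSum_smul {𝕜 E : Type*} [RCLike 𝕜] [NormedAddCommGroup E]
    [NormedSpace 𝕜 E] {c : ℕ → 𝕜} {v : ℕ → E} {f : E} (hf : HasSum (fun j => c j • v j) f)
    (hc : Summable fun j => ‖c j‖) (hv : ∀ j, ‖v j‖ ≤ 1) : ‖f‖ ≤ ∑' j, ‖c j‖ :=
  hf.tsum_eq ▸ tsum_of_norm_bounded hc.hasSum fun j => by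
    simpa [norm_smul] using mul_le_mul_of_nonneg_left (hv j) (norm_nonneg (c j))

theorem norm_inner_le_tsum_mul_of_hasSum {𝕜 E : Type*} [RCLike 𝕜] [NormedAddCommGroup E]
    [InnerProductSpace 𝕜 E] {c : ℕ → 𝕜} {v : ℕ → E} {f : E}
    (hf : HasSum (fun j => c j • v j) f) (hc : Summable fun j => ‖c j‖)
    (x : E) {β : ℝ} (hβ : ∀ j, ‖⟪x, v j⟫_𝕜‖ ≤ β) :
    ‖⟪x, f⟫_𝕜‖ ≤ (∑' j, ‖c j‖) * β := by
  have hsum : HasSum (fun j => c j * ⟪x, v j⟫_𝕜) ⟪x, f⟫_𝕜 := by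
    simpa [inner_smul_right] using (innerSL 𝕜 x).hasSum hf
  have hbound : ∀ j, ‖c j * ⟪x, v j⟫_𝕜‖ ≤ ‖c j‖ * β := fun j => by
    rw [norm_mul]; exact mul_le_mul_of_nonneg_left (hβ j) (norm_nonneg _)
  rw [← hsum.tsum_eq, ← hc.tsum_mul_right]
  exact tsum_of_norm_bounded (hc.mul_right β).hasSum hbound

section proj

variable {H : Type*} [NormedAddCommGroup H] [InnerProductSpace ℂ H] [CompleteSpace H]

theorem proj_mem (K : Submodule ℂ H) (g : H) : proj K g ∈ K.topologicalClosure :=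
  haveI : CompleteSpace K.topologicalClosure := K.isClosed_topologicalClosure.completeSpace_coe
  (K.topologicalClosure.orthogonalProjectionOnto g).2

theorem inner_sub_proj_eq_zero (K : Submodule ℂ H) (g : H) {w : H}
    (hw : w ∈ K.topologicalClosure) : ⟪g - proj K g, w⟫_ℂ = 0 := by
  have : CompleteSpace K.topologicalClosure := K.isClosed_topologicalClosure.completeSpace_coe
  exact Submodule.inner_left_of_mem_orthogonal hw
    (K.topologicalClosure.sub_starProjection_mem_orthogonal g)

theorem norm_sub_proj_le (K : Submodule ℂ H) (g : H) {v : H}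
    (hv : v ∈ K.topologicalClosure) : ‖g - proj K g‖ ≤ ‖g - v‖ := by
  have : CompleteSpace K.topologicalClosure := K.isClosed_topologicalClosure.completeSpace_coe
  rw [show proj K g = K.topologicalClosure.starProjection g from rfl,
    Submodule.starProjection_minimal]
  exact ciInf_le ⟨0, by rintro _ ⟨w, rfl⟩; positivity⟩ (⟨v, hv⟩ : K.topologicalClosure)

theorem norm_sub_proj_le_norm (K : Submodule ℂ H) (g : H) : ‖g - proj K g‖ ≤ ‖g‖ := by
  simpa using norm_sub_proj_le K g (zero_mem _)

theorem norm_sub_proj_le_iSup (K : Submodule ℂ H) {ι : Type*} {v : ι → H}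
    (hv : ∀ i, ‖v i‖ ≤ 1) (j : ι) :
    ‖v j - proj K (v j)‖ ≤ ⨆ i, ‖v i - proj K (v i)‖ :=
  le_ciSup (f := fun i => ‖v i - proj K (v i)‖)
    ⟨1, by rintro _ ⟨i, rfl⟩; exact (norm_sub_proj_le_norm K (v i)).trans (hv i)⟩ j

theorem inner_sub_proj_sub_proj (K : Submodule ℂ H) (g φ : H) :
    ⟪g - proj K g, φ - proj K φ⟫_ℂ = ⟪g - proj K g, φ⟫_ℂ := by
  rw [inner_sub_right, inner_sub_proj_eq_zero K g (proj_mem K φ), sub_zero]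

theorem sq_norm_sub_proj_eq_norm_inner (K : Submodule ℂ H) (g : H) :
    ‖g - proj K g‖ ^ 2 = ‖⟪g - proj K g, g⟫_ℂ‖ := by
  rw [← inner_sub_proj_sub_proj, inner_self_eq_norm_sq_to_K]
  simp

theorem sq_norm_sub_proj_le_sub_sq_inner {K K' : Submodule ℂ H} (hKK' : K ≤ K') {B : H}
    (hB : B ∈ K'.topologicalClosure) (hB1 : ‖B‖ = 1) (g : H) :
    ‖g - proj K' g‖ ^ 2 ≤ ‖g - proj K g‖ ^ 2 - ‖⟪g - proj K g, B⟫_ℂ‖ ^ 2 := by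
  set x := g - proj K g
  have hv : proj K g + ⟪B, x⟫_ℂ • B ∈ K'.topologicalClosure :=
    add_mem (Submodule.topologicalClosure_mono hKK' (proj_mem K g)) (Submodule.smul_mem _ _ hB)
  have hgv : g - (proj K g + ⟪B, x⟫_ℂ • B) = x - ⟪B, x⟫_ℂ • B := by
    simp only [x]; abel
  rw [← norm_sub_inner_smul_sq hB1, ← hgv]
  exact pow_le_pow_left₀ (norm_nonneg _) (norm_sub_proj_le K' g hv) 2

theorem mul_norm_inner_sub_proj_le (K : Submodule ℂ H) (g : H) {φ : H} {t r C : ℝ}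
    (hr : ‖φ - proj K φ‖ ≤ r) (hC : 0 ≤ C)
    (hsel : 0 < ‖φ - proj K φ‖ → t * (‖⟪g - proj K g, φ⟫_ℂ‖ / ‖φ - proj K φ‖) ≤ C) :
    t * ‖⟪g - proj K g, φ⟫_ℂ‖ ≤ r * C := by
  rcases (norm_nonneg (φ - proj K φ)).eq_or_lt with hd | hd
  · rw [← inner_sub_proj_sub_proj, norm_eq_zero.1 hd.symm, inner_zero_right, norm_zero,
      mul_zero]
    exact mul_nonneg ((norm_nonneg _).trans hr) hC
  · have := hsel hd
    rw [mul_div_assoc', div_le_iff₀ hd] at this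
    nlinarith

theorem mul_sq_norm_sub_proj_le (K : Submodule ℂ H) {c : ℕ → ℂ} {v : ℕ → H} {f : H}
    (hf : HasSum (fun j => c j • v j) f) (hc : Summable fun j => ‖c j‖) {t r C : ℝ}
    (ht : 0 < t) (hr : ∀ j, ‖v j - proj K (v j)‖ ≤ r) (hC : 0 ≤ C)
    (hsel : ∀ j, 0 < ‖v j - proj K (v j)‖ →
      t * (‖⟪f - proj K f, v j⟫_ℂ‖ / ‖v j - proj K (v j)‖) ≤ C) :
    t * ‖f - proj K f‖ ^ 2 ≤ (∑' j, ‖c j‖) * (r * C) := by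
  have hterm : ∀ j, ‖⟪f - proj K f, v j⟫_ℂ‖ ≤ r * C / t := fun j =>
    (le_div_iff₀' ht).2 (mul_norm_inner_sub_proj_le K f (hr j) hC (hsel j))
  have := norm_inner_le_tsum_mul_of_hasSum hf hc (f - proj K f) hterm
  rw [sq_norm_sub_proj_eq_norm_inner, ← le_div_iff₀' ht]
  exact this.trans_eq (mul_div_assoc _ _ _).symm

theorem sq_norm_sub_proj_le_sub_sq_inner_normalize {K K' : Submodule ℂ H} (hKK' : K ≤ K')
    {φ : H} (hφ : φ ∈ K') (hd : 0 < ‖φ - proj K φ‖) (g : H) :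
    ‖g - proj K' g‖ ^ 2 ≤ ‖g - proj K g‖ ^ 2 -
      ‖⟪g - proj K g, ‖φ - proj K φ‖⁻¹ • (φ - proj K φ)⟫_ℂ‖ ^ 2 := by
  refine sq_norm_sub_proj_le_sub_sq_inner hKK' ?_ ?_ g
  · exact Submodule.smul_of_tower_mem _ _ <| sub_mem (K'.le_topologicalClosure hφ)
      (Submodule.topologicalClosure_mono hKK' (proj_mem K φ))
  · rw [norm_smul, norm_inv, norm_norm, inv_mul_cancel₀ hd.ne']

end proj

theorem stmt9_general {H : Type*} [NormedAddCommGroup H] [InnerProductSpace ℂ H] [CompleteSpace H]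
    (D : Set H) (hD_unit : ∀ φ ∈ D, ‖φ‖ = 1)
    (M : ℝ) (hM : 0 < M)
    (c : ℕ → ℂ) (ψt : ℕ → H) (hψt : ∀ j, ψt j ∈ D)
    (f : H) (hf : HasSum (fun j => c j • ψt j) f)
    (hc_summable : Summable fun j => ‖c j‖) (hcM : ∑' j, ‖c j‖ ≤ M)
    (t : ℕ → ℝ) (ht : ∀ k, 1 ≤ k → 0 < t k ∧ t k ≤ 1)
    (ψ : ℕ → H)
    (Hk : ℕ → Submodule ℂ H)
    (hHk : ∀ k, Hk k = Submodule.span ℂ (ψ '' {j | 1 ≤ j ∧ j ≤ k}))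
    (fk : ℕ → H) (hfk : ∀ n, 1 ≤ n → fk n = f - proj (Hk (n - 1)) f)
    (hd : ∀ k, 1 ≤ k → 0 < ‖ψ k - proj (Hk (k - 1)) (ψ k)‖)
    (Bk : ℕ → H)
    (hBk : ∀ k, 1 ≤ k → Bk k =
      (‖ψ k - proj (Hk (k - 1)) (ψ k)‖)⁻¹ • (ψ k - proj (Hk (k - 1)) (ψ k)))
    (hsel : ∀ k, 1 ≤ k → ∀ φ ∈ D, 0 < ‖φ - proj (Hk (k - 1)) φ‖ →
      t k * (‖(inner ℂ (fk k) φ : ℂ)‖ / ‖φ - proj (Hk (k - 1)) φ‖)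
        ≤ ‖(inner ℂ (fk k) (Bk k) : ℂ)‖)
    (rk : ℕ → ℝ) (hrk : ∀ k, 1 ≤ k → rk k = ⨆ j, ‖ψt j - proj (Hk (k - 1)) (ψt j)‖)
    (hrk_pos : ∀ k, 1 ≤ k → 0 < rk k) :
    ∀ n, 1 ≤ n → ‖fk n‖ ≤
      M / Real.sqrt (1 + ∑ k ∈ Finset.Icc 1 (n - 1), (t k / rk k) ^ 2) := by
  have hr : ∀ k, 1 ≤ k → ∀ j, ‖ψt j - proj (Hk (k - 1)) (ψt j)‖ ≤ rk k := fun k hk j =>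
    hrk k hk ▸ norm_sub_proj_le_iSup _ (fun i => (hD_unit _ (hψt i)).le) j
  have hcapture : ∀ k, 1 ≤ k → t k * ‖fk k‖ ^ 2 ≤ M * (rk k * ‖⟪fk k, Bk k⟫_ℂ‖) := by
    intro k hk
    have := mul_sq_norm_sub_proj_le (Hk (k - 1)) hf hc_summable (ht k hk).1 (hr k hk)
      (norm_nonneg _) fun j => hfk k hk ▸ hsel k hk (ψt j) (hψt j)
    rw [← hfk k hk] at this
    exact this.trans <|
      mul_le_mul_of_nonneg_right hcM (mul_nonneg (hrk_pos k hk).le (norm_nonneg _))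
  have hdecrease : ∀ k, 1 ≤ k →
      ‖fk (k + 1)‖ ^ 2 ≤ ‖fk k‖ ^ 2 - ‖⟪fk k, Bk k⟫_ℂ‖ ^ 2 := by
    intro k hk
    have hle : Hk (k - 1) ≤ Hk k := hHk k ▸ hHk (k - 1) ▸
      Submodule.span_mono (Set.image_mono fun j hj => ⟨hj.1, hj.2.trans (Nat.sub_le k 1)⟩)
    have hψk : ψ k ∈ Hk k := hHk k ▸ Submodule.subset_span ⟨k, ⟨hk, le_rfl⟩, rfl⟩
    rw [hfk k hk, hfk (k + 1) (by omega), Nat.add_sub_cancel, hBk k hk]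
    exact sq_norm_sub_proj_le_sub_sq_inner_normalize hle hψk (hd k hk) f
  have hstep : ∀ k, 1 ≤ k → (t k / rk k) ^ 2 * (‖fk k‖ ^ 2) ^ 2 ≤
      M ^ 2 * (‖fk k‖ ^ 2 - ‖fk (k + 1)‖ ^ 2) := fun k hk =>
    div_sq_mul_sq_le_of_le_mul (hrk_pos k hk) (mul_nonneg (ht k hk).1.le (sq_nonneg _))
      (hcapture k hk) (hdecrease k hk)
  have hfk1 : ‖fk 1‖ ^ 2 ≤ M ^ 2 := by
    refine pow_le_pow_left₀ (norm_nonneg _) ?_ 2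
    calc ‖fk 1‖ ≤ ‖f‖ := hfk 1 le_rfl ▸ norm_sub_proj_le_norm _ _
      _ ≤ M := (norm_le_tsum_norm_of_hasSum_smul hf hc_summable
          fun j => (hD_unit _ (hψt j)).le).trans hcM
  intro n hn
  exact le_div_sqrt_of_sq_mul_le (norm_nonneg _) hM.le (by positivity) <|
    mul_one_add_sum_le_of_sq_le_mul_sub (pow_pos hM 2) (fun k => by positivity)
      (fun k => by positivity) hfk1 hstep n hn

/-- Error bound of WPre-OGA: for `f ∈ H(D,M)` with representation `f = ∑ c j • ψt j`,
selections `ψ k ∈ D` with `d k = ‖ψ k - P_{H_{k-1}} ψ k‖ > 0`,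
`B k = (ψ k - P_{H_{k-1}} ψ k)/d k`, pre-orthogonal weak maximal selection
`|⟨f_k, B_k⟩| ≥ t_k · sup {|⟨f_k, φ⟩|/‖φ - P_{H_{k-1}} φ‖ : φ ∈ D, ‖φ - P_{H_{k-1}} φ‖ > 0}`
(stated equivalently elementwise), and `r k = sup_j ‖ψt j - P_{H_{k-1}} ψt j‖ > 0`,
one has `‖f_n‖ ≤ M·(1 + ∑_{k=1}^{n-1} (t k / r k)²)^{-1/2}`. -/
theorem stmt9 {H : Type*} [NormedAddCommGroup H] [InnerProductSpace ℂ H] [CompleteSpace H]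
    (D : Set H) (hD_unit : ∀ φ ∈ D, ‖φ‖ = 1)
    (hD_span : (Submodule.span ℂ D).topologicalClosure = ⊤)
    (M : ℝ) (hM : 0 < M)
    (c : ℕ → ℂ) (ψt : ℕ → H) (hψt : ∀ j, ψt j ∈ D)
    (f : H) (hf : HasSum (fun j => c j • ψt j) f)
    (hc_summable : Summable fun j => ‖c j‖) (hcM : ∑' j, ‖c j‖ ≤ M)
    (t : ℕ → ℝ) (ht : ∀ k, 1 ≤ k → 0 < t k ∧ t k ≤ 1)
    (ψ : ℕ → H) (hψD : ∀ k, 1 ≤ k → ψ k ∈ D)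
    (Hk : ℕ → Submodule ℂ H)
    (hHk : ∀ k, Hk k = Submodule.span ℂ (ψ '' {j | 1 ≤ j ∧ j ≤ k}))
    (fk : ℕ → H) (hfk : ∀ n, 1 ≤ n → fk n = f - proj (Hk (n - 1)) f)
    (hd : ∀ k, 1 ≤ k → 0 < ‖ψ k - proj (Hk (k - 1)) (ψ k)‖)
    (Bk : ℕ → H)
    (hBk : ∀ k, 1 ≤ k → Bk k =
      (‖ψ k - proj (Hk (k - 1)) (ψ k)‖)⁻¹ • (ψ k - proj (Hk (k - 1)) (ψ k)))
    (hsel : ∀ k, 1 ≤ k → ∀ φ ∈ D, 0 < ‖φ - proj (Hk (k - 1)) φ‖ →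
      t k * (‖(inner ℂ (fk k) φ : ℂ)‖ / ‖φ - proj (Hk (k - 1)) φ‖)
        ≤ ‖(inner ℂ (fk k) (Bk k) : ℂ)‖)
    (rk : ℕ → ℝ) (hrk : ∀ k, 1 ≤ k → rk k = ⨆ j, ‖ψt j - proj (Hk (k - 1)) (ψt j)‖)
    (hrk_pos : ∀ k, 1 ≤ k → 0 < rk k) :
    ∀ n, 1 ≤ n → ‖fk n‖ ≤
      M / Real.sqrt (1 + ∑ k ∈ Finset.Icc 1 (n - 1), (t k / rk k) ^ 2) :=
  stmt9_general D hD_unit M hM c ψt hψt f hf hc_summable hcM t ht ψ Hk hHk fk hfk hd Bk hBk hsel rk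
    hrk hrk_pos
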